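/- Let m, n be coprime odd integers. Then there exist even integers q₀, q₁, ..., q_r with qᵢ ≠ 0 for i > 0, such that m/n = [q₀, q₁, ..., q_r, 1] (continued fraction ending with partial quotient 1). Moreover, such a presentation can be chosen with q_r ≠ -2 unless mn = -1. -/
import Mathlib

def cfVal : List ℤ → ℚ
  | [] => 0
  | [a] => (a : ℚ)
  | a :: b :: l => (a : ℚ) + (cfVal (b :: l))⁻¹

lemma cfVal_cons (a : ℤ) (l : List ℤ) (h : l ≠ []) :
    cfVal (a :: l) = (a : ℚ) + (cfVal l)⁻¹ := by
  cases l with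
  | nil => exact absurd rfl h
  | cons b t => rfl

lemma step (m n : ℤ) (hm : Odd m) (h1 : 1 < n.natAbs) (hnd : ¬ (n ∣ m)) :
    ∃ q r : ℤ, Even q ∧ Odd r ∧ m = q * n + r ∧ r.natAbs < n.natAbs := by
  set a : ℤ := (n.natAbs : ℤ) with ha
  have ha1 : 1 < a := by omega
  have hb : (0:ℤ) < 2*a := by omega
  set s := m % (2*a) with hs
  set k := m / (2*a) with hk
  have hdiv : 2*a * k + s = m := Int.mul_ediv_add_emod m (2*a)
  have hs0 : 0 ≤ s := Int.emod_nonneg m (by omega)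
  have hs2 : s < 2*a := Int.emod_lt_of_pos m hb
  have hsa : s ≠ a := by
    intro h
    apply hnd
    rw [← Int.natAbs_dvd]
    exact ⟨2*k+1, by rw [← hdiv, h]; ring⟩
  obtain ⟨c, hc⟩ := hm
  have hsodd : Odd s := ⟨c - a*k, by linarith⟩
  have hn0 : n ≠ 0 := by omega
  by_cases hlt : s < a
  · rcases hn0.lt_or_gt with hneg | hpos
    · refine ⟨-(2*k), s, ⟨-k, by ring⟩, hsodd, ?_, by omega⟩
      have hqn : -(2*k) * n = 2*a*k := by
        have : a = -n := by omega
        rw [this]; ring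
      linarith
    · refine ⟨2*k, s, ⟨k, by ring⟩, hsodd, ?_, by omega⟩
      have hqn : 2*k * n = 2*a*k := by
        have : a = n := by omega
        rw [this]; ring
      linarith
  · have hlt' : a < s := by omega
    obtain ⟨d, hd⟩ := hsodd
    have hrodd : Odd (s - 2*a) := ⟨d - a, by omega⟩
    rcases hn0.lt_or_gt with hneg | hpos
    · refine ⟨-(2*(k+1)), s - 2*a, ⟨-(k+1), by ring⟩, hrodd, ?_, by omega⟩
      have hqn : -(2*(k+1)) * n = 2*a*(k+1) := by
        have : a = -n := by omega
        rw [this]; ring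
      have : 2*a*(k+1) = 2*a*k + 2*a := by ring
      linarith
    · refine ⟨2*(k+1), s - 2*a, ⟨k+1, by ring⟩, hrodd, ?_, by omega⟩
      have hqn : 2*(k+1) * n = 2*a*k + 2*a := by
        have : a = n := by omega
        rw [this]; ring
      linarith

lemma main : ∀ N : ℕ, ∀ m n : ℤ, n.natAbs ≤ N → Odd m → Odd n → IsCoprime m n →
    ∃ L : List ℤ, L ≠ [] ∧ (∀ x ∈ L, Even x) ∧ (∀ x ∈ L.tail, x ≠ 0) ∧
      cfVal (L ++ [1]) = (m:ℚ)/(n:ℚ) ∧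
      (L.getLast? = some (-2) → m * n = -1) ∧
      (n.natAbs < m.natAbs → L.head? ≠ some 0) := by
  intro N
  induction N using Nat.strong_induction_on with
  | _ N IH =>
  intro m n hN hm hn hcop
  obtain ⟨cm, hcm⟩ := hm
  obtain ⟨cn, hcn⟩ := hn
  have hn0 : n ≠ 0 := by omega
  by_cases h1 : 1 < n.natAbs
  · -- recursive case
    have hnd : ¬ n ∣ m := by
      intro hd
      have hu : IsUnit n := hcop.isUnit_of_dvd' hd dvd_rfl
      rcases Int.isUnit_iff.mp hu with h | h <;> omega
    obtain ⟨q, r, hq, hr, hmqr, hlt⟩ := step m n ⟨cm, hcm⟩ h1 hnd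
    have hcop2 : IsCoprime n r := by
      have h2 : r = m + n * (-q) := by rw [hmqr]; ring
      have := hcop.symm.add_mul_left_right (-q)
      rwa [← h2] at this
    obtain ⟨T, hT, hTeven, hTtail, hTval, hTlast, hThead⟩ :=
      IH r.natAbs (by omega) n r le_rfl ⟨cn, hcn⟩ ⟨hr.choose, hr.choose_spec⟩ hcop2
    obtain ⟨b, t, rfl⟩ := List.exists_cons_of_ne_nil hT
    have hb0 : b ≠ 0 := by
      intro h
      exact hThead hlt (by simp [h])
    refine ⟨q :: b :: t, by simp, ?_, ?_, ?_, ?_, ?_⟩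
    · intro x hx
      rcases List.mem_cons.mp hx with rfl | hx
      · exact hq
      · exact hTeven x hx
    · intro x hx
      rcases List.mem_cons.mp hx with rfl | hx
      · exact hb0
      · exact hTtail x hx
    · rw [List.cons_append, cfVal_cons q ((b::t)++[1]) (by simp), hTval, inv_div, hmqr]
      have hnQ : (n:ℚ) ≠ 0 := Int.cast_ne_zero.mpr hn0
      push_cast
      field_simp
    · rw [List.getLast?_cons_cons]
      intro h
      have hnr := hTlast h
      have h2 : n.natAbs * r.natAbs = 1 := by
        have := Int.natAbs_mul n r
        rw [hnr] at this
        omega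
      have h3 : n.natAbs ∣ 1 := ⟨r.natAbs, h2.symm⟩
      have := Nat.le_of_dvd one_pos h3
      omega
    · intro hlt2 h
      simp only [List.head?_cons, Option.some_inj] at h
      subst h
      have : m = r := by omega
      omega
  · -- base case |n| = 1
    have h2 : n = 1 ∨ n = -1 := by omega
    rcases h2 with rfl | rfl
    · refine ⟨[m-1], by simp, ?_, by simp, ?_, ?_, ?_⟩
      · intro x hx
        simp only [List.mem_singleton] at hx
        exact hx ▸ ⟨cm, by omega⟩
      · show cfVal [m-1, 1] = _
        simp [cfVal]
      · intro h
        simp only [List.getLast?_singleton, Option.some_inj] at h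
        omega
      · intro hlt h
        simp only [List.head?_cons, Option.some_inj] at h
        omega
    · refine ⟨[-m-1], by simp, ?_, by simp, ?_, ?_, ?_⟩
      · intro x hx
        simp only [List.mem_singleton] at hx
        exact hx ▸ ⟨-cm-1, by omega⟩
      · show cfVal [-m-1, 1] = _
        simp [cfVal]
        field_simp
      · intro h
        simp only [List.getLast?_singleton, Option.some_inj] at h
        omega
      · intro hlt h
        simp only [List.head?_cons, Option.some_inj] at h
        omega

/-- for coprime odd `m, n`, there is a presentation
`m/n = [q₀,…,q_r,1]` with all `qᵢ` even and `qᵢ ≠ 0` for `i > 0`; moreover it can be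
chosen with `q_r ≠ -2` unless `m*n = -1`. -/
theorem stmt11 (m n : ℤ) (hm : Odd m) (hn : Odd n) (hcop : IsCoprime m n) :
    ∃ q : List ℤ, q ≠ [] ∧ (∀ x ∈ q, Even x) ∧
      (∀ i : ℕ, 0 < i → ∀ h : i < q.length, q.get ⟨i, h⟩ ≠ 0) ∧
      cfVal (q ++ [1]) = (m : ℚ) / (n : ℚ) ∧
      (m * n = -1 ∨ q.getLast? ≠ some (-2)) := by
  obtain ⟨L, hL, heven, htail, hval, hlast, -⟩ := main n.natAbs m n le_rfl hm hn hcop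
  refine ⟨L, hL, heven, ?_, hval, ?_⟩
  · intro i hi h
    obtain ⟨a, t, rfl⟩ := List.exists_cons_of_ne_nil hL
    obtain ⟨j, rfl⟩ : ∃ j, i = j + 1 := ⟨i - 1, by omega⟩
    have hjl : j < t.length := by simpa using h
    have heq : (a :: t).get ⟨j+1, h⟩ = t.get ⟨j, hjl⟩ := rfl
    rw [heq]
    exact htail _ (by simpa using List.get_mem t ⟨j, hjl⟩)
  · by_cases hc : L.getLast? = some (-2)
    · exact Or.inl (hlast hc)
    · exact Or.inr hc
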